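/- arXiv:2104.03371 — 4 statements merged into one kernel-verified Lean document; each statement's English description precedes it below -/
import Mathlib

section
/- Let L be a left Leibniz algebra, a ∈ L, and x, y ∈ ⟨a⟩ (the subalgebra generated by a). Then for every element z ∈ L, [[x,y],z] = 0. -/
/-!
The left centre `ker br` is preserved by right multiplication, `[L, ker br] ⊆ ker br`, and the
Leibniz identity gives `[[a,a],z] = [a,[a,z]] - [a,[a,z]] = 0`. Hence every bracket of two elements
of `span {a} + ker br` lies in `ker br`, so `span {a} + ker br` is a subalgebra containing `a`;
by minimality it contains `⟨a⟩`.
-/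

open Submodule

namespace LinearMap

variable {R M : Type*} [CommRing R] [AddCommGroup M] [Module R M] (br : M →ₗ[R] M →ₗ[R] M)
  (hleib : ∀ a b c : M, br (br a b) c = br a (br b c) - br b (br a c))
include hleib

theorem bracket_self_mem_ker (x : M) : br x x ∈ ker br := by
  rw [mem_ker]
  ext z
  simp [hleib]

theorem bracket_mem_ker_of_right_mem_ker (x : M) {u : M} (hu : u ∈ ker br) :
    br x u ∈ ker br := by
  rw [mem_ker] at hu ⊢
  ext z
  simp [hleib, hu]

theorem bracket_mem_ker_of_mem_span_singleton_sup_ker {a x y : M}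
    (hx : x ∈ span R {a} ⊔ ker br) (hy : y ∈ span R {a} ⊔ ker br) : br x y ∈ ker br := by
  obtain ⟨p, hp, k, hk, rfl⟩ := mem_sup.mp hx
  obtain ⟨q, hq, l, hl, rfl⟩ := mem_sup.mp hy
  obtain ⟨c, rfl⟩ := mem_span_singleton.mp hp
  obtain ⟨d, rfl⟩ := mem_span_singleton.mp hq
  rw [mem_ker] at hk
  simp only [map_add, map_smul, hk, smul_apply, add_zero]
  exact add_mem (smul_mem _ _ (smul_mem _ _ (bracket_self_mem_ker br hleib a)))
    (smul_mem _ _ (bracket_mem_ker_of_right_mem_ker br hleib a hl))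

end LinearMap

theorem bracket_of_cyclic_in_left_center_general
    {F : Type*} [Field F] {L : Type*} [AddCommGroup L] [Module F L]
    (br : L →ₗ[F] L →ₗ[F] L)
    (hleib : ∀ a b c : L, br (br a b) c = br a (br b c) - br b (br a c))
    (a : L) (A : Submodule F L)
    (hAmin : ∀ S : Submodule F L, a ∈ S → (∀ x ∈ S, ∀ y ∈ S, br x y ∈ S) → A ≤ S) :
    ∀ x ∈ A, ∀ y ∈ A, ∀ z : L, br (br x y) z = 0 := by
  have hA : A ≤ span F {a} ⊔ LinearMap.ker br :=
    hAmin _ (mem_sup_left (mem_span_singleton_self a)) fun x hx y hy =>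
      mem_sup_right (LinearMap.bracket_mem_ker_of_mem_span_singleton_sup_ker br hleib hx hy)
  intro x hx y hy z
  exact LinearMap.congr_fun
    (LinearMap.bracket_mem_ker_of_mem_span_singleton_sup_ker br hleib (hA hx) (hA hy)) z

/-- If `A = ⟨a⟩` is the cyclic subalgebra generated by `a` (the smallest subspace
containing `a` and closed under the bracket), then `[[x,y],z] = 0` for all
`x, y ∈ A` and all `z ∈ L`. -/
theorem bracket_of_cyclic_in_left_center
    {F : Type*} [Field F] {L : Type*} [AddCommGroup L] [Module F L]
    (br : L →ₗ[F] L →ₗ[F] L)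
    (hleib : ∀ a b c : L, br (br a b) c = br a (br b c) - br b (br a c))
    (a : L) (A : Submodule F L)
    (haA : a ∈ A)
    (hAclosed : ∀ x ∈ A, ∀ y ∈ A, br x y ∈ A)
    (hAmin : ∀ S : Submodule F L, a ∈ S → (∀ x ∈ S, ∀ y ∈ S, br x y ∈ S) → A ≤ S) :
    ∀ x ∈ A, ∀ y ∈ A, ∀ z : L, br (br x y) z = 0 :=
  bracket_of_cyclic_in_left_center_general br hleib a A hAmin
end

section
/- Let L be a left Leibniz algebra over a field F that contains no proper nonzero subalgebras. Then L is one-dimensional; in particular L is a Lie algebra with trivial bracket. -/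
/-! The Leibniz identity makes every square `[a, a]` a left annihilator. The left annihilators
form a subalgebra, so by minimality they are either `0` (then all squares vanish) or all of `L`
(then the bracket vanishes). Either way `[x, x] = 0`, so the line through any `x ≠ 0` is an
abelian subalgebra, hence all of `L`. -/

section LeftLeibniz

variable {R L : Type*} [CommRing R] [AddCommGroup L] [Module R L] (br : L →ₗ[R] L →ₗ[R] L)

theorem bracket_mem_ker_of_left_mem_ker {x : L} (hx : x ∈ LinearMap.ker br) (y : L) :
    br x y ∈ LinearMap.ker br := by
  rw [LinearMap.mem_ker.mp hx, LinearMap.zero_apply]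
  exact Submodule.zero_mem _

variable {br}

theorem bracket_self_mem_ker (hleib : ∀ a b c : L, br (br a b) c = br a (br b c) - br b (br a c))
    (a : L) : br a a ∈ LinearMap.ker br := by
  rw [LinearMap.mem_ker]
  ext c
  rw [hleib, sub_self, LinearMap.zero_apply]

theorem bracket_self_eq_zero_of_ker_eq_bot_or_top
    (hleib : ∀ a b c : L, br (br a b) c = br a (br b c) - br b (br a c))
    (hker : LinearMap.ker br = ⊥ ∨ LinearMap.ker br = ⊤) (a : L) : br a a = 0 := by
  rcases hker with hbot | htop
  · simpa [hbot] using bracket_self_mem_ker hleib a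
  · have ha : a ∈ LinearMap.ker br := htop ▸ Submodule.mem_top
    rw [LinearMap.mem_ker.mp ha, LinearMap.zero_apply]

theorem bracket_eq_zero_of_mem_span_singleton {x : L} (hx : br x x = 0)
    {u v : L} (hu : u ∈ Submodule.span R {x}) (hv : v ∈ Submodule.span R {x}) : br u v = 0 := by
  obtain ⟨a, rfl⟩ := Submodule.mem_span_singleton.mp hu
  obtain ⟨b, rfl⟩ := Submodule.mem_span_singleton.mp hv
  simp [hx]

end LeftLeibniz

/-- A (nonzero) left Leibniz algebra with no proper nonzero subalgebras is
one-dimensional, and in particular it is a Lie algebra with trivial bracket. -/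
theorem dim_one_of_no_proper_subalgebras
    {F : Type*} [Field F] {L : Type*} [AddCommGroup L] [Module F L] [Nontrivial L]
    (br : L →ₗ[F] L →ₗ[F] L)
    (hleib : ∀ a b c : L, br (br a b) c = br a (br b c) - br b (br a c))
    (hmin : ∀ S : Submodule F L, (∀ x ∈ S, ∀ y ∈ S, br x y ∈ S) → S = ⊥ ∨ S = ⊤) :
    Module.finrank F L = 1 ∧ ∀ x y : L, br x y = 0 := by
  have hsq : ∀ a : L, br a a = 0 := bracket_self_eq_zero_of_ker_eq_bot_or_top hleib
    (hmin _ fun x hx y _ => bracket_mem_ker_of_left_mem_ker br hx y)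
  obtain ⟨x, hx⟩ := exists_ne (0 : L)
  have habel : ∀ u ∈ Submodule.span F {x}, ∀ v ∈ Submodule.span F {x}, br u v = 0 :=
    fun _ hu _ hv => bracket_eq_zero_of_mem_span_singleton (hsq x) hu hv
  have htop : Submodule.span F {x} = ⊤ :=
    (hmin _ fun u hu v hv => habel u hu v hv ▸ Submodule.zero_mem _).resolve_left
      (Submodule.span_singleton_eq_bot.not.mpr hx)
  refine ⟨?_, fun u v => habel u (htop ▸ Submodule.mem_top) v (htop ▸ Submodule.mem_top)⟩
  rw [← finrank_top F L, ← htop, finrank_span_singleton hx]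
end

section
/- Let L be a finite-dimensional left Leibniz algebra over a field F containing an ideal K of codimension 1. If K is non-abelian and dim_F(K/Leib(K)) = 1, then Leib(L) = Leib(K). -/
/-!
Squares left-annihilate everything in a left Leibniz algebra. If `a ∉ K`, then `a` spans `L ⧸ K`,
so `[a,a] = ρ a + k` with `k ∈ K`; multiplying on the right by `a` puts `ρ [a,a]`, hence `ρ² a`,
into `K`, so `ρ = 0` and every square of `L` lies in `K`. Dually, if some `p ∈ K` left-annihilating
everything were not in `Leib(K)`, it would span `K ⧸ Leib(K)`, and then all of `K` would
left-annihilate `L`, contradicting that `K` is non-abelian. So `Leib(L) ⊆ K` consists of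
left annihilators and lies in `Leib(K)`.
-/

theorem Submodule.exists_sub_smul_mem_of_finrank_quotient_eq_one {F V : Type*} [Field F]
    [AddCommGroup V] [Module F V] {N : Submodule F V} (h : Module.finrank F (V ⧸ N) = 1)
    {v : V} (hv : v ∉ N) (w : V) : ∃ c : F, w - c • v ∈ N := by
  have hv' : N.mkQ v ≠ 0 := by simpa using hv
  obtain ⟨c, hc⟩ := (finrank_eq_one_iff_of_nonzero' _ hv').mp h (N.mkQ w)
  exact ⟨c, (Submodule.Quotient.eq N).mp (by simpa using hc.symm)⟩

section LeftLeibniz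

variable {F L : Type*} [Field F] [AddCommGroup L] [Module F L] {br : L →ₗ[F] L →ₗ[F] L}

theorem sq_mul_eq_zero_of_leftLeibniz
    (hleib : ∀ a b c : L, br (br a b) c = br a (br b c) - br b (br a c)) (a z : L) :
    br (br a a) z = 0 := by
  rw [hleib, sub_self]

theorem mul_eq_zero_of_mem_span_sq
    (hleib : ∀ a b c : L, br (br a b) c = br a (br b c) - br b (br a c)) {p : L}
    (hp : p ∈ Submodule.span F {z : L | ∃ a : L, z = br a a}) (z : L) : br p z = 0 := by
  induction hp using Submodule.span_induction with
  | mem _ h => obtain ⟨a, rfl⟩ := h; exact sq_mul_eq_zero_of_leftLeibniz hleib a z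
  | zero => simp
  | add _ _ _ _ hx hy => simp [hx, hy]
  | smul _ _ _ hx => simp [hx]

theorem sq_mem_of_finrank_quotient_eq_one
    (hleib : ∀ a b c : L, br (br a b) c = br a (br b c) - br b (br a c))
    {K : Submodule F L} (hK : ∀ x ∈ K, ∀ a : L, br x a ∈ K)
    (hcodim : Module.finrank F (L ⧸ K) = 1) (a : L) : br a a ∈ K := by
  by_cases ha : a ∈ K
  · exact hK a ha a
  obtain ⟨ρ, hk⟩ := Submodule.exists_sub_smul_mem_of_finrank_quotient_eq_one hcodim ha (br a a)
  have hρsq : ρ • br a a ∈ K := by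
    have h := hK _ hk a
    rwa [map_sub, map_smul, LinearMap.sub_apply, LinearMap.smul_apply,
      sq_mul_eq_zero_of_leftLeibniz hleib, zero_sub, neg_mem_iff] at h
  have hρ : ρ = 0 := by
    by_contra hρ
    have hρa : ρ • (ρ • a) ∈ K := by
      have h := sub_mem hρsq (K.smul_mem ρ hk)
      rwa [smul_sub, sub_sub_cancel] at h
    exact ha ((K.smul_mem_iff hρ).mp ((K.smul_mem_iff hρ).mp hρa))
  simpa [hρ] using hk

end LeftLeibniz

theorem mem_of_mul_eq_zero_of_finrank_quotient_eq_one {F L : Type*} [Field F] [AddCommGroup L]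
    [Module F L] {br : L →ₗ[F] L →ₗ[F] L} {K S : Submodule F L}
    (hS : ∀ s ∈ S, ∀ z : L, br s z = 0)
    (hK1 : Module.finrank F (↥K ⧸ S.comap K.subtype) = 1)
    (hnonzero : ∃ x ∈ K, ∃ y : L, br x y ≠ 0)
    {p : L} (hpK : p ∈ K) (hp : ∀ z : L, br p z = 0) : p ∈ S := by
  by_contra hpS
  obtain ⟨x, hxK, y, hxy⟩ := hnonzero
  have hpS' : (⟨p, hpK⟩ : K) ∉ S.comap K.subtype := hpS
  obtain ⟨c, hc⟩ :=
    Submodule.exists_sub_smul_mem_of_finrank_quotient_eq_one hK1 hpS' ⟨x, hxK⟩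
  have hsplit : br x y = br (x - c • p) y + c • br p y := by
    simp only [map_sub, map_smul, LinearMap.sub_apply, LinearMap.smul_apply, sub_add_cancel]
  exact hxy (by rw [hsplit, hS _ (by simpa using hc), hp, smul_zero, add_zero])

theorem leibniz_kernel_eq_of_codim_one_ideal_general
    {F : Type*} [Field F] {L : Type*} [AddCommGroup L] [Module F L]
    (br : L →ₗ[F] L →ₗ[F] L)
    (hleib : ∀ a b c : L, br (br a b) c = br a (br b c) - br b (br a c))
    (K : Submodule F L)
    (hideal : ∀ a : L, ∀ x ∈ K, br a x ∈ K ∧ br x a ∈ K)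
    (hcodim : Module.finrank F (L ⧸ K) = 1)
    (hnonab : ∃ x ∈ K, ∃ y ∈ K, br x y ≠ 0)
    (hK1 : Module.finrank F
      (↥K ⧸ (Submodule.comap K.subtype
        (Submodule.span F {z : L | ∃ a ∈ K, z = br a a}))) = 1) :
    Submodule.span F {z : L | ∃ a : L, z = br a a} =
      Submodule.span F {z : L | ∃ a ∈ K, z = br a a} := by
  have hKL : Submodule.span F {z : L | ∃ a ∈ K, z = br a a} ≤
      Submodule.span F {z : L | ∃ a : L, z = br a a} :=
    Submodule.span_mono fun _ ⟨a, _, h⟩ => ⟨a, h⟩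
  have hright : ∀ x ∈ K, ∀ a : L, br x a ∈ K := fun x hx a => (hideal a x hx).2
  obtain ⟨x, hxK, y, -, hxy⟩ := hnonab
  refine le_antisymm (Submodule.span_le.mpr ?_) hKL
  rintro _ ⟨a, rfl⟩
  exact mem_of_mul_eq_zero_of_finrank_quotient_eq_one
    (fun s hs => mul_eq_zero_of_mem_span_sq hleib (hKL hs)) hK1 ⟨x, hxK, y, hxy⟩
    (sq_mem_of_finrank_quotient_eq_one hleib hright hcodim a)
    (sq_mul_eq_zero_of_leftLeibniz hleib a)

/-- Let `L` be a finite-dimensional left Leibniz algebra with an ideal `K` of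
codimension 1. If `K` is non-abelian and `dim_F(K / Leib(K)) = 1`, then
`Leib(L) = Leib(K)`. -/
theorem leibniz_kernel_eq_of_codim_one_ideal
    {F : Type*} [Field F] {L : Type*} [AddCommGroup L] [Module F L]
    [FiniteDimensional F L]
    (br : L →ₗ[F] L →ₗ[F] L)
    (hleib : ∀ a b c : L, br (br a b) c = br a (br b c) - br b (br a c))
    (K : Submodule F L)
    (hideal : ∀ a : L, ∀ x ∈ K, br a x ∈ K ∧ br x a ∈ K)
    (hcodim : Module.finrank F (L ⧸ K) = 1)
    (hnonab : ∃ x ∈ K, ∃ y ∈ K, br x y ≠ 0)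
    (hK1 : Module.finrank F
      (↥K ⧸ (Submodule.comap K.subtype
        (Submodule.span F {z : L | ∃ a ∈ K, z = br a a}))) = 1) :
    Submodule.span F {z : L | ∃ a : L, z = br a a} =
      Submodule.span F {z : L | ∃ a ∈ K, z = br a a} :=
  leibniz_kernel_eq_of_codim_one_ideal_general br hleib K hideal hcodim hnonab hK1
end

section
/- Let K be the cyclic nilpotent Leibniz algebra of dimension n over a field F with basis a_1, ..., a_n where [a_1, a_1] = a_2, [a_1, a_{j-1}] = a_j for 3 ≤ j ≤ n, [a_1, a_n] = 0, and [a_m, a_k] = 0 for all m > 1. If f is a derivation of K and f(a_1) = γ_1 a_1 + γ_2 a_2 + ... + γ_n a_n, then for each k with 2 ≤ k ≤ n, f(a_k) = k·γ_1 a_k + γ_2 a_{k+1} + γ_3 a_{k+2} + ... + γ_{n-k+1} a_n. -/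
/-! Only `a_1` acts nontrivially from the left, so `[f a_1, -] = γ_1 [a_1, -]`, while `[a_1, -]`
shifts coordinates up by one. Applying `f` to `a_{k+1} = [a_1, a_k]` therefore gives
`f a_{k+1} = γ_1 a_{k+1} + [a_1, f a_k]`, and induction on `k` shows that the diagonal
coefficient gains `γ_1` at each step while the others are the `γ_i`, shifted `k` places. -/

namespace Module.Basis

variable {R L M ι : Type*} [CommSemiring R] [AddCommMonoid L] [Module R L]
  [AddCommMonoid M] [Module R M]

theorem linearMap_apply_eq_repr_smul [Fintype ι] (a : Basis ι R L)
    (B : L →ₗ[R] M) (i₀ : ι) (hB : ∀ i, i ≠ i₀ → B (a i) = 0) (x : L) :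
    B x = a.repr x i₀ • B (a i₀) := by
  conv_lhs => rw [← a.sum_repr x]
  rw [map_sum, Finset.sum_eq_single i₀ (fun i _ hi => by rw [map_smul, hB i hi, smul_zero])
    (by simp), map_smul]

section Shift

variable {n : ℕ} (a : Basis (Fin n) R L) (T : L →ₗ[R] L)

theorem repr_apply_zero_eq_zero_of_shift
    (hsucc : ∀ j : Fin n, ∀ h : j.val + 1 < n, T (a j) = a ⟨j.val + 1, h⟩)
    (hlast : ∀ j : Fin n, j.val + 1 = n → T (a j) = 0) (h0 : 0 < n) (x : L) :
    a.repr (T x) ⟨0, h0⟩ = 0 := by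
  suffices (Finsupp.lapply ⟨0, h0⟩ ∘ₗ a.repr.toLinearMap ∘ₗ T) = 0 from
    LinearMap.congr_fun this x
  refine a.ext fun i => ?_
  by_cases h : i.val + 1 < n
  · simp [hsucc i h]
  · simp [hlast i (by omega)]

theorem repr_apply_succ_of_shift
    (hsucc : ∀ j : Fin n, ∀ h : j.val + 1 < n, T (a j) = a ⟨j.val + 1, h⟩)
    (hlast : ∀ j : Fin n, j.val + 1 = n → T (a j) = 0) (x : L) (j : ℕ) (hj : j + 1 < n) :
    a.repr (T x) ⟨j + 1, hj⟩ = a.repr x ⟨j, by omega⟩ := by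
  suffices (Finsupp.lapply ⟨j + 1, hj⟩ ∘ₗ a.repr.toLinearMap ∘ₗ T) =
      Finsupp.lapply ⟨j, by omega⟩ ∘ₗ a.repr.toLinearMap from
    LinearMap.congr_fun this x
  refine a.ext fun i => ?_
  by_cases h : i.val + 1 < n
  · simp [hsucc i h, Finsupp.single_apply, Fin.ext_iff]
  · simp [hlast i (by omega), Finsupp.single_apply, Fin.ext_iff]
    omega

end Shift

end Module.Basis

section CyclicLeibniz

open Module

variable {R L : Type*} [CommSemiring R] [AddCommMonoid L] [Module R L] {n : ℕ} (h0 : 0 < n)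
  (a : Basis (Fin n) R L) (br : L →ₗ[R] L →ₗ[R] L) (f : L →ₗ[R] L)

theorem derivation_apply_basis_succ
    (hsucc : ∀ j : Fin n, ∀ h : j.val + 1 < n, br (a ⟨0, h0⟩) (a j) = a ⟨j.val + 1, h⟩)
    (habel : ∀ i j : Fin n, i.val ≠ 0 → br (a i) (a j) = 0)
    (hf : ∀ x y : L, f (br x y) = br (f x) y + br x (f y)) (k : ℕ) (hk : k + 1 < n) :
    f (a ⟨k + 1, hk⟩) =
      a.repr (f (a ⟨0, h0⟩)) ⟨0, h0⟩ • a ⟨k + 1, hk⟩ + br (a ⟨0, h0⟩) (f (a ⟨k, by omega⟩)) := by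
  have hbr : br (f (a ⟨0, h0⟩)) = a.repr (f (a ⟨0, h0⟩)) ⟨0, h0⟩ • br (a ⟨0, h0⟩) :=
    a.linearMap_apply_eq_repr_smul br _
      (fun i hi => a.ext fun j => habel i j fun hi0 => hi (Fin.ext hi0)) _
  rw [← hsucc ⟨k, by omega⟩ hk, hf, hbr, LinearMap.smul_apply]

theorem repr_derivation_apply_basis
    (hsucc : ∀ j : Fin n, ∀ h : j.val + 1 < n, br (a ⟨0, h0⟩) (a j) = a ⟨j.val + 1, h⟩)
    (hlast : ∀ j : Fin n, j.val + 1 = n → br (a ⟨0, h0⟩) (a j) = 0)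
    (habel : ∀ i j : Fin n, i.val ≠ 0 → br (a i) (a j) = 0)
    (hf : ∀ x y : L, f (br x y) = br (f x) y + br x (f y)) (k : ℕ) (hk : k < n) (j : Fin n) :
    a.repr (f (a ⟨k, hk⟩)) j =
      (if j.val = k then ((k + 1 : ℕ) : R) * a.repr (f (a ⟨0, h0⟩)) ⟨0, h0⟩ else 0) +
        (if k < j.val then a.repr (f (a ⟨0, h0⟩)) ⟨j.val - k, by omega⟩ else 0) := by
  induction k generalizing j with
  | zero =>
    rcases j with ⟨_ | j, hj⟩ <;> simp
  | succ k ih =>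
    rw [derivation_apply_basis_succ h0 a br f hsucc habel hf k hk]
    rcases j with ⟨_ | j, hj⟩
    · simp [a.repr_apply_zero_eq_zero_of_shift _ hsucc hlast]
    · simp only [map_add, map_smul, Finsupp.add_apply, Finsupp.smul_apply, a.repr_self,
        a.repr_apply_succ_of_shift _ hsucc hlast, ih, Finsupp.single_apply, Fin.ext_iff]
      rcases lt_trichotomy j k with hjk | rfl | hjk
      · simp [hjk.ne, hjk.ne', hjk.not_gt]
      · simp only [if_true, if_false, lt_irrefl]
        push_cast
        ring
      · simp [hjk.ne, hjk.ne', hjk]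

end CyclicLeibniz

/-- Let `K` be the cyclic nilpotent Leibniz algebra with basis `a ⟨0, by omega⟩, …, a (n-1)`
(representing `a_1, …, a_n`), where `[a_1, a_{j-1}] = a_j` and all other products of
basis vectors vanish. If `f` is a derivation with
`f(a_1) = γ_1 a_1 + ⋯ + γ_n a_n`, then for every `k ≥ 2` (0-indexed `k ≥ 1`),
`f(a_k) = k γ_1 a_k + γ_2 a_{k+1} + ⋯ + γ_{n-k+1} a_n`. -/
theorem derivation_of_cyclic_nilpotent
    {F : Type*} [Field F] {L : Type*} [AddCommGroup L] [Module F L]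
    {n : ℕ} (hn : 2 ≤ n)
    (a : Module.Basis (Fin n) F L)
    (br : L →ₗ[F] L →ₗ[F] L)
    (hsucc : ∀ j : Fin n, ∀ h : j.val + 1 < n, br (a ⟨0, by omega⟩) (a j) = a ⟨j.val + 1, h⟩)
    (hlast : ∀ j : Fin n, j.val + 1 = n → br (a ⟨0, by omega⟩) (a j) = 0)
    (habel : ∀ i j : Fin n, i.val ≠ 0 → br (a i) (a j) = 0)
    (f : L →ₗ[F] L)
    (hf : ∀ x y : L, f (br x y) = br (f x) y + br x (f y))
    (γ : Fin n → F)
    (hfa1 : f (a ⟨0, by omega⟩) = ∑ i : Fin n, γ i • a i) :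
    ∀ k : Fin n, 1 ≤ k.val →
      f (a k) = (((k.val + 1 : ℕ) : F) * γ ⟨0, by omega⟩) • a k +
        ∑ j : Fin n, (if k.val < j.val then
          γ ⟨j.val - k.val, lt_of_le_of_lt (Nat.sub_le _ _) j.isLt⟩ else 0) • a j := by
  intro k _
  have hγ : ⇑(a.repr (f (a ⟨0, by omega⟩))) = γ := by rw [hfa1, a.repr_sum_self]
  refine a.ext_elem fun j => ?_
  rw [repr_derivation_apply_basis (by omega) a br f hsucc hlast habel hf k k.isLt j, hγ]
  simp only [map_add, map_smul, Finsupp.add_apply, Finsupp.smul_apply, a.repr_self,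
    a.repr_sum_self, Finsupp.single_apply, Fin.ext_iff, smul_eq_mul, mul_ite, mul_one, mul_zero,
    eq_comm]
end
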